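/- arXiv:1309.1840 — 2 statements merged into one kernel-verified Lean document; each statement's English description precedes it below -/
import Mathlib

section
/- Let $\mu_1,\ldots,\mu_n$ be real numbers with $\sum_i \mu_i = 0$ and $\sum_i \mu_i^2 = B^2$ where $B \geq 0$. Then $\left|\sum_i \mu_i^3\right| \leq \frac{n-2}{\sqrt{n(n-1)}} B^3$. -/
/-!
Put `a = B / √(n(n-1))`. Applying Cauchy–Schwarz to the other coordinates gives
`n μᵢ² ≤ (n-1) B²`, i.e. `μᵢ ≥ -(n-1) a` for every `i`. Hence every term of
`∑ᵢ (μᵢ - a)² (μᵢ + (n-1) a)` is nonnegative, and expanding this sum with `∑ μᵢ = 0` and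
`n(n-1) a² = B²` gives `∑ μᵢ³ + (n-2) a B² ≥ 0`. Replacing `μ` by `-μ` gives the other bound.
-/

open Finset

variable {ι : Type*} [Fintype ι] {μ : ι → ℝ}

lemma card_mul_sq_le_of_sum_eq_zero (h : ∑ j, μ j = 0) (i : ι) :
    (Fintype.card ι : ℝ) * μ i ^ 2 ≤ ((Fintype.card ι : ℝ) - 1) * ∑ j, μ j ^ 2 := by
  classical
  have hrest : ∑ j ∈ univ.erase i, μ j = -μ i := by
    linarith [add_sum_erase univ μ (mem_univ i)]
  have hrest_sq : ∑ j ∈ univ.erase i, μ j ^ 2 = ∑ j, μ j ^ 2 - μ i ^ 2 := by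
    linarith [add_sum_erase univ (fun j ↦ μ j ^ 2) (mem_univ i)]
  have hcs := sq_sum_le_card_mul_sum_sq (s := univ.erase i) (f := μ)
  rw [hrest, hrest_sq, card_erase_of_mem (mem_univ i), card_univ,
    Nat.cast_sub (Fintype.card_pos_iff.mpr ⟨i⟩), Nat.cast_one] at hcs
  linarith

lemma neg_card_sub_one_mul_le_apply {a : ℝ} (ha : 0 ≤ a) (h : ∑ j, μ j = 0)
    (hscale : (Fintype.card ι : ℝ) * ((Fintype.card ι : ℝ) - 1) * a ^ 2 = ∑ j, μ j ^ 2)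
    (i : ι) : -(((Fintype.card ι : ℝ) - 1) * a) ≤ μ i := by
  have hn : (1 : ℝ) ≤ Fintype.card ι := by exact_mod_cast Fintype.card_pos_iff.mpr ⟨i⟩
  have hsq : μ i ^ 2 ≤ (((Fintype.card ι : ℝ) - 1) * a) ^ 2 := by
    have := card_mul_sq_le_of_sum_eq_zero h i
    rw [← hscale] at this
    nlinarith [sq_nonneg (((Fintype.card ι : ℝ) - 1) * a)]
  exact (abs_le_of_sq_le_sq' hsq (mul_nonneg (by linarith) ha)).1

lemma neg_mul_sum_sq_le_sum_cube {a : ℝ} (ha : 0 ≤ a) (h : ∑ j, μ j = 0)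
    (hscale : (Fintype.card ι : ℝ) * ((Fintype.card ι : ℝ) - 1) * a ^ 2 = ∑ j, μ j ^ 2) :
    -(((Fintype.card ι : ℝ) - 2) * a * ∑ j, μ j ^ 2) ≤ ∑ j, μ j ^ 3 := by
  set n : ℝ := (Fintype.card ι : ℝ)
  have hexpand : ∑ j, (μ j - a) ^ 2 * (μ j + (n - 1) * a)
      = ∑ j, μ j ^ 3 + (n - 3) * a * ∑ j, μ j ^ 2 + (3 - 2 * n) * a ^ 2 * ∑ j, μ j
        + ∑ _j : ι, (n - 1) * a ^ 3 := by
    simp only [mul_sum, ← sum_add_distrib]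
    exact sum_congr rfl fun j _ ↦ by ring
  have hnonneg : 0 ≤ ∑ j, (μ j - a) ^ 2 * (μ j + (n - 1) * a) :=
    sum_nonneg fun j _ ↦ mul_nonneg (sq_nonneg _)
      (by linarith [neg_card_sub_one_mul_le_apply ha h hscale j])
  rw [hexpand, h, sum_const, card_univ, nsmul_eq_mul, ← hscale] at hnonneg
  rw [← hscale]
  linarith

lemma abs_sum_cube_le {a : ℝ} (ha : 0 ≤ a) (h : ∑ j, μ j = 0)
    (hscale : (Fintype.card ι : ℝ) * ((Fintype.card ι : ℝ) - 1) * a ^ 2 = ∑ j, μ j ^ 2) :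
    |∑ j, μ j ^ 3| ≤ ((Fintype.card ι : ℝ) - 2) * a * ∑ j, μ j ^ 2 := by
  have hneg := neg_mul_sum_sq_le_sum_cube (μ := -μ) ha
    (by simp [sum_neg_distrib, h]) (by simpa using hscale)
  simp only [Pi.neg_apply, neg_sq, Odd.neg_pow (by decide : Odd 3), sum_neg_distrib] at hneg
  exact abs_le.2 ⟨neg_mul_sum_sq_le_sum_cube ha h hscale, by linarith⟩

theorem okumura (n : ℕ) (hn : 2 ≤ n) (μ : Fin n → ℝ) (B : ℝ) (hB : 0 ≤ B)
    (h1 : ∑ i, μ i = 0) (h2 : ∑ i, (μ i) ^ 2 = B ^ 2) :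
    |∑ i, (μ i) ^ 3| ≤ ((n : ℝ) - 2) / Real.sqrt ((n : ℝ) * ((n : ℝ) - 1)) * B ^ 3 := by
  have hpos : 0 < (n : ℝ) * ((n : ℝ) - 1) := by
    have : (2 : ℝ) ≤ n := by exact_mod_cast hn
    nlinarith
  set s := Real.sqrt ((n : ℝ) * ((n : ℝ) - 1))
  have hs : 0 < s := Real.sqrt_pos.2 hpos
  have hscale : (Fintype.card (Fin n) : ℝ) * ((Fintype.card (Fin n) : ℝ) - 1) * (B / s) ^ 2
      = ∑ i, μ i ^ 2 := by
    rw [Fintype.card_fin, h2, div_pow, Real.sq_sqrt hpos.le]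
    exact mul_div_cancel₀ _ hpos.ne'
  calc |∑ i, μ i ^ 3| ≤ ((n : ℝ) - 2) * (B / s) * ∑ i, μ i ^ 2 := by
        simpa using abs_sum_cube_le (div_nonneg hB hs.le) h1 hscale
    _ = ((n : ℝ) - 2) / s * B ^ 3 := by rw [h2]; ring
end

section
/- Let $n \geq 3$, $c > 0$, $a \geq 0$, $b \leq \frac{2c}{n}$, and $H \in \mathbb{R}$ with $H^2 \geq \frac{4(n-1)}{n^2}c$ and $H \geq 0$. Set $\Phi = \sqrt{n(n-1)(H^2 + aH - b)}$ (well-defined since $H^2 + aH - b \geq H^2 - \frac{2c}{n} > 0$). Then $\Phi^2 - \frac{n(n-2)}{\sqrt{n(n-1)}}H\Phi + nc - nH^2 > 0$. -/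
/-!
Write `Φ = √(n(n-1)) · u` with `u = √(H² + aH - b)`. Then `L_H(Φ) = n (L - R)` with
`L = (n-1)u² + c - H²` and `R = (n-2)Hu`. The hypotheses on `a` and `b` give
`w := n u² - n H² + 2c ≥ 0`, and in terms of `w`
`n L = (n-1) w + (n-2)(nH² - c)` and
`n² (L² - R²) = (n-1)² w² + (n-2)(n²H² - 2(n-1)c) w + (n-2)² c²`.
Both are positive once `n²H² ≥ 2(n-1)c`, so `L > |R|`.
-/

namespace LinearWeingarten

/-- The paper's `L_H`, as a polynomial in `x = |φ|`. -/
noncomputable def LH (n c H x : ℝ) : ℝ :=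
  x ^ 2 - n * (n - 2) / √(n * (n - 1)) * H * x + n * c - n * H ^ 2

theorem LH_sqrt_mul {n : ℝ} (hn : 1 < n) (c H u : ℝ) :
    LH n c H (√(n * (n - 1)) * u) = n * ((n - 1) * u ^ 2 + c - H ^ 2 - (n - 2) * H * u) := by
  have hpos : 0 < n * (n - 1) := by nlinarith
  have hs : 0 < √(n * (n - 1)) := Real.sqrt_pos.2 hpos
  have hs2 : √(n * (n - 1)) ^ 2 = n * (n - 1) := Real.sq_sqrt hpos.le
  unfold LH
  field_simp
  rw [hs2]
  ring

theorem LH_reduced_pos {n c H u : ℝ} (hn : 2 < n) (hc : 0 < c)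
    (hH : 2 * (n - 1) * c ≤ n ^ 2 * H ^ 2) (hu : n * H ^ 2 ≤ n * u ^ 2 + 2 * c) :
    0 < (n - 1) * u ^ 2 + c - H ^ 2 - (n - 2) * H * u := by
  set L := (n - 1) * u ^ 2 + c - H ^ 2
  set w := n * u ^ 2 - n * H ^ 2 + 2 * c
  have hw : 0 ≤ w := by linarith
  have hn0 : 0 < n := by linarith
  have hHc : 0 < n * H ^ 2 - c := by nlinarith
  have hL : 0 < L := by
    have key : n * L = (n - 1) * w + (n - 2) * (n * H ^ 2 - c) := by ring
    have : 0 < n * L := by rw [key]; nlinarith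
    exact pos_of_mul_pos_right this hn0.le
  have hsq : ((n - 2) * H * u) ^ 2 < L ^ 2 := by
    have key : n ^ 2 * (L ^ 2 - ((n - 2) * H * u) ^ 2) =
        (n - 1) ^ 2 * w ^ 2 + (n - 2) * (n ^ 2 * H ^ 2 - 2 * (n - 1) * c) * w
          + (n - 2) ^ 2 * c ^ 2 := by ring
    have : 0 < n ^ 2 * (L ^ 2 - ((n - 2) * H * u) ^ 2) := by
      rw [key]
      have : 0 < (n - 2) ^ 2 * c ^ 2 := by
        have : 0 < n - 2 := by linarith
        positivity
      have : 0 ≤ (n - 2) * (n ^ 2 * H ^ 2 - 2 * (n - 1) * c) * w :=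
        mul_nonneg (mul_nonneg (by linarith) (by linarith)) hw
      positivity
    exact sub_pos.1 (pos_of_mul_pos_right this (by positivity))
  exact sub_pos.2 ((le_abs_self _).trans_lt (abs_lt_of_sq_lt_sq hsq hL.le))

end LinearWeingarten

open LinearWeingarten in
theorem LH_positive (n : ℕ) (hn : 3 ≤ n) (c a b H : ℝ) (hc : 0 < c)
    (ha : 0 ≤ a) (hb : b ≤ 2 * c / n)
    (hH2 : H ^ 2 ≥ 4 * ((n : ℝ) - 1) / n ^ 2 * c) (hH : 0 ≤ H) :
    Real.sqrt (n * ((n : ℝ) - 1) * (H ^ 2 + a * H - b)) ^ 2 -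
        (n * ((n : ℝ) - 2)) / Real.sqrt ((n : ℝ) * ((n : ℝ) - 1)) * H *
          Real.sqrt (n * ((n : ℝ) - 1) * (H ^ 2 + a * H - b)) +
        n * c - n * H ^ 2 > 0 := by
  have hn3 : (3 : ℝ) ≤ n := by exact_mod_cast hn
  have hnb : n * b ≤ 2 * c := by rwa [le_div_iff₀ (by positivity), mul_comm] at hb
  have hnH : 4 * (n - 1) * c ≤ n ^ 2 * H ^ 2 := by
    rw [ge_iff_le, div_mul_eq_mul_div, div_le_iff₀ (by positivity)] at hH2
    linarith
  have hu : n * H ^ 2 ≤ n * (H ^ 2 + a * H - b) + 2 * c := by nlinarith [mul_nonneg ha hH]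
  have hQ : 0 ≤ H ^ 2 + a * H - b := by nlinarith
  change 0 < LH n c H _
  rw [Real.sqrt_mul (by nlinarith), LH_sqrt_mul (by linarith)]
  exact mul_pos (by linarith)
    (LH_reduced_pos (by linarith) hc (by nlinarith) (by rwa [Real.sq_sqrt hQ]))
end
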